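/- Let w ∈ S_n be one of the four elements: s_i; s_i s_{i−1}⋯s_{i−δ} (δ ≥ 1); s_i s_{i+1}⋯s_{i+δ} (δ ≥ 1); or s_i s_{i−1}⋯s_{i−δ⁻} s_{i+1}⋯s_{i+δ⁺} (δ⁻, δ⁺ ≥ 1), where all indices lie in {1,…,n−1}. Then there is exactly one transposition t ∈ S_n such that t·w lies in the subgroup of S_n generated by {s_j : j ≠ i}. -/

import Mathlib

/-- The simple transposition `s_j = (j, j+1)` of `S_n` (here `n = m + 1` and the simple
transpositions are indexed 0-based by `j ∈ {0, …, m-1}`; out-of-range indices give `1`). -/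
def simpleT (m : ℕ) (j : ℕ) : Equiv.Perm (Fin (m + 1)) :=
  if h : j < m then Equiv.swap ⟨j, by omega⟩ ⟨j + 1, by omega⟩ else 1

/-- The product of the word `l` (a list of 0-based indices of simple transpositions). -/
def wordProd (m : ℕ) (l : List ℕ) : Equiv.Perm (Fin (m + 1)) :=
  (l.map (simpleT m)).prod

/-- The set of simple transpositions `s_j` with `j ≠ i`. -/
def simplesAvoiding (m : ℕ) (i : ℕ) : Set (Equiv.Perm (Fin (m + 1))) :=
  {g | ∃ j : ℕ, j < m ∧ j ≠ i ∧ g = simpleT m j}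

/-!
Writing `w = s_i u` with `u` a word in the `s_j`, `j ≠ i`, the transposition `s_i` works.
Conversely every element of the parabolic subgroup `⟨s_j : j ≠ i⟩` maps `{0, …, i}` to itself,
so if `t w` lies in it then so does `t s_i = (t w)(s_i w)⁻¹`. Then `t` must move both `i` and
`i + 1` (otherwise `t s_i` carries one of them across the gap between `i` and `i + 1`), and a
transposition moving two given points is the transposition of those points.
-/

lemma Equiv.Perm.IsSwap.eq_swap_of_apply_ne {α : Type*} [DecidableEq α] {σ : Equiv.Perm α}
    (hσ : σ.IsSwap) {a b : α} (hab : a ≠ b) (ha : σ a ≠ a) (hb : σ b ≠ b) :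
    σ = Equiv.swap a b := by
  obtain ⟨c, d, -, rfl⟩ := hσ
  rw [Equiv.swap_apply_ne_self_iff] at ha hb
  rcases ha.2 with rfl | rfl <;> rcases hb.2 with rfl | rfl
  exacts [absurd rfl hab, rfl, Equiv.swap_comm _ _, absurd rfl hab]

lemma simpleT_of_lt {m j : ℕ} (hj : j < m) :
    simpleT m j = Equiv.swap ⟨j, by omega⟩ ⟨j + 1, by omega⟩ :=
  dif_pos hj

lemma simpleT_mul_self (m j : ℕ) : simpleT m j * simpleT m j = 1 := by
  unfold simpleT
  split_ifs
  exacts [Equiv.swap_mul_self _ _, one_mul 1]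

lemma wordProd_cons (m j : ℕ) (l : List ℕ) :
    wordProd m (j :: l) = simpleT m j * wordProd m l := by
  simp [wordProd]

lemma wordProd_mem_closure_simplesAvoiding {m i : ℕ} {l : List ℕ}
    (hl : ∀ j ∈ l, j < m ∧ j ≠ i) :
    wordProd m l ∈ Subgroup.closure (simplesAvoiding m i) := by
  induction l with
  | nil => exact one_mem _
  | cons j l ih =>
    obtain ⟨hjm, hji⟩ := hl j List.mem_cons_self
    rw [wordProd_cons]
    exact mul_mem (Subgroup.subset_closure ⟨j, hjm, hji, rfl⟩)
      (ih fun k hk => hl k (List.mem_cons_of_mem _ hk))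

lemma val_simpleT_apply_le_iff {m i j : ℕ} (hj : j < m) (hji : j ≠ i) (x : Fin (m + 1)) :
    (simpleT m j x).val ≤ i ↔ x.val ≤ i := by
  rw [simpleT_of_lt hj, Equiv.swap_apply_def]
  split_ifs with h₁ h₂
  · simp only [h₁]; omega
  · simp only [h₂]; omega
  · rfl

lemma val_apply_le_iff_of_mem_closure_simplesAvoiding {m i : ℕ} {g : Equiv.Perm (Fin (m + 1))}
    (hg : g ∈ Subgroup.closure (simplesAvoiding m i)) (x : Fin (m + 1)) :
    (g x).val ≤ i ↔ x.val ≤ i := by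
  induction hg using Subgroup.closure_induction generalizing x with
  | mem g hg =>
    obtain ⟨j, hj, hji, rfl⟩ := hg
    exact val_simpleT_apply_le_iff hj hji x
  | one => rfl
  | mul g h _ _ ihg ihh => rw [Equiv.Perm.mul_apply, ihg, ihh]
  | inv g _ ihg => simpa using (ihg (g⁻¹ x)).symm

lemma eq_simpleT_of_isSwap_of_mul_mem_closure {m i : ℕ} (hi : i < m)
    {t : Equiv.Perm (Fin (m + 1))} (ht : t.IsSwap)
    (hts : t * simpleT m i ∈ Subgroup.closure (simplesAvoiding m i)) :
    t = simpleT m i := by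
  have hpres := val_apply_le_iff_of_mem_closure_simplesAvoiding hts
  rw [simpleT_of_lt hi] at hpres ⊢
  refine ht.eq_swap_of_apply_ne (by simp) (fun h => ?_) (fun h => ?_)
  · have := hpres ⟨i + 1, by omega⟩
    simp [h] at this
  · have := hpres ⟨i, by omega⟩
    simp [h] at this

lemma existsUnique_isSwap_mul_mem_closure {m i : ℕ} (hi : i < m)
    {u : Equiv.Perm (Fin (m + 1))} (hu : u ∈ Subgroup.closure (simplesAvoiding m i)) :
    ∃! t : Equiv.Perm (Fin (m + 1)),
      t.IsSwap ∧ t * (simpleT m i * u) ∈ Subgroup.closure (simplesAvoiding m i) := by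
  have hs : simpleT m i * (simpleT m i * u) = u := by
    rw [← mul_assoc, simpleT_mul_self, one_mul]
  refine ⟨simpleT m i, ⟨⟨_, _, by simp, simpleT_of_lt hi⟩, by rwa [hs]⟩, ?_⟩
  rintro t ⟨ht, htw⟩
  refine eq_simpleT_of_isSwap_of_mul_mem_closure hi ht ?_
  have : t * simpleT m i = t * (simpleT m i * u) * u⁻¹ := by group
  rw [this]
  exact mul_mem htw (inv_mem hu)

/-- Let `w ∈ S_n` be one of the four elements: `s_i`;
`s_i s_{i-1} ⋯ s_{i-δ}` (`δ ≥ 1`); `s_i s_{i+1} ⋯ s_{i+δ}` (`δ ≥ 1`); or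
`s_i s_{i-1} ⋯ s_{i-δ⁻} s_{i+1} ⋯ s_{i+δ⁺}` (`δ⁻, δ⁺ ≥ 1`), where all indices lie in
`{1, …, n-1}`.  Then there is exactly one transposition `t ∈ S_n` (i.e. `t` is a 2-cycle,
`t.IsSwap`) such that `t · w` lies in the subgroup of `S_n` generated by `{s_j : j ≠ i}`.
(0-based formalization, with `i < m`.) -/
theorem statement11 {m : ℕ} (i : ℕ) (hi : i < m) (w : Equiv.Perm (Fin (m + 1)))
    (hw : (w = simpleT m i) ∨
      (∃ δ : ℕ, 1 ≤ δ ∧ δ ≤ i ∧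
        w = wordProd m (i :: (List.range δ).map (fun t => i - 1 - t))) ∨
      (∃ δ : ℕ, 1 ≤ δ ∧ i + δ < m ∧
        w = wordProd m (i :: (List.range δ).map (fun t => i + 1 + t))) ∨
      (∃ δ₁ δ₂ : ℕ, 1 ≤ δ₁ ∧ 1 ≤ δ₂ ∧ δ₁ ≤ i ∧ i + δ₂ < m ∧
        w = wordProd m
          (i :: ((List.range δ₁).map (fun t => i - 1 - t) ++
                 (List.range δ₂).map (fun t => i + 1 + t))))) :
    ∃! t : Equiv.Perm (Fin (m + 1)),
      t.IsSwap ∧ t * w ∈ Subgroup.closure (simplesAvoiding m i) := by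
  obtain ⟨l, hl, rfl⟩ : ∃ l : List ℕ, (∀ j ∈ l, j < m ∧ j ≠ i) ∧ w = wordProd m (i :: l) := by
    rcases hw with rfl | ⟨δ, -, hδ, rfl⟩ | ⟨δ, -, hδ, rfl⟩ | ⟨δ₁, δ₂, -, -, hδ₁, hδ₂, rfl⟩
    · exact ⟨[], by simp, by simp [wordProd]⟩
    all_goals
      refine ⟨_, fun j hj => ?_, rfl⟩
      simp only [List.mem_append, List.mem_map, List.mem_range] at hj
      rcases hj with ⟨k, hk, rfl⟩ | ⟨k, hk, rfl⟩ <;> omega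
  rw [wordProd_cons]
  exact existsUnique_isSwap_mul_mem_closure hi (wordProd_mem_closure_simplesAvoiding hl)
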